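/- arXiv:1712.01764 — 8 statements merged into one kernel-verified Lean document; each statement's English description precedes it below -/
import Mathlib

section
/- Let Λ > 0. For every A > 0 and every real 𝒥 ≠ 0 there exists a unique ∈ (0, π²/√(2Λ³)] such that, setting 𝒥̂ = (𝒥/A²)·Â², equality holds in the relation Λ³Â⁶/(2¹⁰π⁶𝒥̂²) = (Â·√(Â² + 512π²𝒥̂²) − Â² − 128π²𝒥̂²)³ / (Â − √(Â² + 512π²𝒥̂²))⁴. Moreover, the inequality Λ³A⁶/(2¹⁰π⁶𝒥²) ≤ (A·√(A² + 512π²𝒥²) − A² − 128π²𝒥²)³ / (A − √(A² + 512π²𝒥²))⁴ holds if and only if A ≤ Â. -/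
open Real

/-- Left-hand side of the CCLP area–angular momentum relation. -/
noncomputable def cclpLHS (Λ A J : ℝ) : ℝ :=
  Λ ^ 3 * A ^ 6 / (2 ^ 10 * π ^ 6 * J ^ 2)

/-- Right-hand side of the CCLP area–angular momentum relation. -/
noncomputable def cclpRHS (A J : ℝ) : ℝ :=
  (A * Real.sqrt (A ^ 2 + 512 * π ^ 2 * J ^ 2) - A ^ 2 - 128 * π ^ 2 * J ^ 2) ^ 3 /
    (A - Real.sqrt (A ^ 2 + 512 * π ^ 2 * J ^ 2)) ^ 4

/-!
Along the curve `t ↦ (t, j t²)`, `j = 𝒥/A²`, put `u = √(1 + 512π²j²t²)`. The square root in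
`cclpRHS` becomes `t u`, and eliminating `j` through `512π²j²t² = u² - 1` shows that
`cclpLHS - cclpRHS` is a positive multiple of `g(t) = 32Λ³t² + π⁴(u + 1)(u - 3)³`. As
`(u + 1)(u - 3)³` has derivative `4u(u - 3)² ≥ 0`, `g` is strictly increasing on `[0, ∞)`; it is
`-16π⁴` at `0` and nonnegative at `π²/√(2Λ³)`, where `32Λ³t² = 16π⁴` and `(u + 1)(u - 3)³ ≥ -16`
because `u ≥ 1`. Its unique zero is `Â`, and `(A, 𝒥)` is the point `t = A` of the curve.
-/

lemma monotoneOn_quartic : MonotoneOn (fun u : ℝ => (u + 1) * (u - 3) ^ 3) (Set.Ici 0) := by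
  intro a (ha : 0 ≤ a) b (hb : 0 ≤ b) hab
  have hba := sub_nonneg.mpr hab
  nlinarith [mul_nonneg hba (sq_nonneg (a - 3)), mul_nonneg hba (sq_nonneg (b - 3)),
    mul_nonneg hba (sq_nonneg (a + b - 6)),
    mul_nonneg (mul_nonneg hba ha) (sq_nonneg (a - 3)),
    mul_nonneg (mul_nonneg hba ha) (sq_nonneg (b - 3)),
    mul_nonneg (mul_nonneg hba hb) (sq_nonneg (a - 3)),
    mul_nonneg (mul_nonneg hba hb) (sq_nonneg (b - 3))]

section Gap

variable (Λ j : ℝ)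

noncomputable def cclpGap (t : ℝ) : ℝ :=
  32 * Λ ^ 3 * t ^ 2 +
    π ^ 4 * ((√(1 + 512 * π ^ 2 * j ^ 2 * t ^ 2) + 1) *
      (√(1 + 512 * π ^ 2 * j ^ 2 * t ^ 2) - 3) ^ 3)

lemma continuous_cclpGap : Continuous (cclpGap Λ j) := by
  unfold cclpGap; fun_prop

lemma cclpGap_zero_neg : cclpGap Λ j 0 < 0 := by
  norm_num [cclpGap]
  positivity

lemma one_le_sqrt_curve (t : ℝ) : 1 ≤ √(1 + 512 * π ^ 2 * j ^ 2 * t ^ 2) :=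
  one_le_sqrt.mpr (le_add_of_nonneg_right (by positivity))

lemma cclpGap_strictMonoOn (hΛ : 0 < Λ) : StrictMonoOn (cclpGap Λ j) (Set.Ici 0) := by
  have hsq : StrictMonoOn (fun t : ℝ => 32 * Λ ^ 3 * t ^ 2) (Set.Ici 0) :=
    fun s hs t ht hst => mul_lt_mul_of_pos_left (pow_left_strictMonoOn₀ two_ne_zero hs ht hst)
      (by positivity)
  have hu : MonotoneOn (fun t : ℝ => √(1 + 512 * π ^ 2 * j ^ 2 * t ^ 2)) (Set.Ici 0) :=
    fun s (hs : 0 ≤ s) t _ hst => sqrt_le_sqrt (by gcongr)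
  have hquartic := monotoneOn_quartic.comp hu
    fun t _ => (zero_le_one.trans (one_le_sqrt_curve j t) : (0 : ℝ) ≤ _)
  exact hsq.add_monotone fun s hs t ht hst =>
    mul_le_mul_of_nonneg_left (hquartic hs ht hst) (by positivity)

lemma cclpGap_nonneg (hΛ : 0 < Λ) : 0 ≤ cclpGap Λ j (π ^ 2 / √(2 * Λ ^ 3)) := by
  set B := π ^ 2 / √(2 * Λ ^ 3)
  have hB : 32 * Λ ^ 3 * B ^ 2 = 16 * π ^ 4 := by
    rw [div_pow, sq_sqrt (by positivity)]; field_simp; ring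
  have hquartic := monotoneOn_quartic (Set.mem_Ici.mpr zero_le_one)
    (Set.mem_Ici.mpr (zero_le_one.trans (one_le_sqrt_curve j B))) (one_le_sqrt_curve j B)
  norm_num at hquartic
  unfold cclpGap
  rw [hB]
  nlinarith [pow_pos pi_pos 4]

lemma cclpLHS_sub_cclpRHS_curve (hj : j ≠ 0) {t : ℝ} (ht : 0 < t) :
    cclpLHS Λ t (j * t ^ 2) - cclpRHS t (j * t ^ 2) = cclpGap Λ j t / (32768 * π ^ 6 * j ^ 2) := by
  set u := √(1 + 512 * π ^ 2 * j ^ 2 * t ^ 2) with hu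
  have hu2 : u ^ 2 = 1 + 512 * π ^ 2 * j ^ 2 * t ^ 2 := sq_sqrt (by positivity)
  have hu1 : 1 < u := (lt_sqrt zero_le_one).mpr (by simp; positivity)
  have hu_sub_one : u - 1 ≠ 0 := by linarith
  have hsqrt : √(t ^ 2 + 512 * π ^ 2 * (j * t ^ 2) ^ 2) = t * u := by
    rw [show t ^ 2 + 512 * π ^ 2 * (j * t ^ 2) ^ 2 = t ^ 2 * (1 + 512 * π ^ 2 * j ^ 2 * t ^ 2) by
      ring, sqrt_mul (sq_nonneg t), sqrt_sq ht.le]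
  have hj2 : j ^ 2 = (u ^ 2 - 1) / (512 * π ^ 2 * t ^ 2) := by
    rw [hu2]; field_simp; ring
  have hRHS : cclpRHS t (j * t ^ 2) = -(t ^ 2 * (u - 3) ^ 3) / (64 * (u - 1)) := by
    rw [cclpRHS, hsqrt, mul_pow, hj2]
    have : 1 - u ≠ 0 := by linarith
    field_simp
    ring
  have hLHS : cclpLHS Λ t (j * t ^ 2) = Λ ^ 3 * t ^ 2 / (1024 * π ^ 6 * j ^ 2) := by
    rw [cclpLHS]; field_simp; ring
  rw [hLHS, hRHS, cclpGap, ← hu, hj2]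
  have : u + 1 ≠ 0 := by linarith
  have : u ^ 2 - 1 ≠ 0 := by nlinarith
  field_simp
  ring

lemma cclpLHS_le_cclpRHS_curve_iff (hj : j ≠ 0) {t : ℝ} (ht : 0 < t) :
    cclpLHS Λ t (j * t ^ 2) ≤ cclpRHS t (j * t ^ 2) ↔ cclpGap Λ j t ≤ 0 := by
  rw [← sub_nonpos, cclpLHS_sub_cclpRHS_curve Λ j hj ht, div_le_iff₀ (by positivity), zero_mul]

lemma cclpLHS_eq_cclpRHS_curve_iff (hj : j ≠ 0) {t : ℝ} (ht : 0 < t) :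
    cclpLHS Λ t (j * t ^ 2) = cclpRHS t (j * t ^ 2) ↔ cclpGap Λ j t = 0 := by
  rw [← sub_eq_zero, cclpLHS_sub_cclpRHS_curve Λ j hj ht, div_eq_zero_iff,
    or_iff_left (by positivity)]

end Gap

/-- Lemma 7.1(a): existence and uniqueness of `Â ∈ (0, π²/√(2Λ³)]` saturating the
CCLP relation along the curve `τ ↦ (τ, 𝒥τ²/A²)`, and the inequality holds iff `A ≤ Â`. -/
theorem stmt0 (Λ A J : ℝ) (hΛ : 0 < Λ) (hA : 0 < A) (hJ : J ≠ 0) :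
    ∃ Ahat : ℝ, (0 < Ahat ∧ Ahat ≤ π ^ 2 / Real.sqrt (2 * Λ ^ 3)) ∧
      cclpLHS Λ Ahat (J / A ^ 2 * Ahat ^ 2) = cclpRHS Ahat (J / A ^ 2 * Ahat ^ 2) ∧
      (∀ A' : ℝ, 0 < A' → A' ≤ π ^ 2 / Real.sqrt (2 * Λ ^ 3) →
        cclpLHS Λ A' (J / A ^ 2 * A' ^ 2) = cclpRHS A' (J / A ^ 2 * A' ^ 2) → A' = Ahat) ∧
      (cclpLHS Λ A J ≤ cclpRHS A J ↔ A ≤ Ahat) := by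
  set j := J / A ^ 2
  have hj : j ≠ 0 := div_ne_zero hJ (by positivity)
  have hmono := cclpGap_strictMonoOn Λ j hΛ
  obtain ⟨Ahat, ⟨hAhat_nonneg, hAhat_le⟩, hgap⟩ :=
    intermediate_value_Icc (by positivity) (continuous_cclpGap Λ j).continuousOn
      ⟨(cclpGap_zero_neg Λ j).le, cclpGap_nonneg Λ j hΛ⟩
  have hAhat : 0 < Ahat :=
    hAhat_nonneg.lt_of_ne (by rintro rfl; exact (cclpGap_zero_neg Λ j).ne hgap)
  refine ⟨Ahat, ⟨hAhat, hAhat_le⟩, (cclpLHS_eq_cclpRHS_curve_iff Λ j hj hAhat).mpr hgap,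
    fun A' hA' _ hsat => hmono.injOn hA'.le hAhat.le ?_, ?_⟩
  · rw [(cclpLHS_eq_cclpRHS_curve_iff Λ j hj hA').mp hsat, hgap]
  · have hJ_eq : J = j * A ^ 2 := (div_mul_cancel₀ J (by positivity)).symm
    rw [hJ_eq, cclpLHS_le_cclpRHS_curve_iff Λ j hj hA, ← hgap]
    exact hmono.le_iff_le hA.le hAhat.le
end

section
/- Let Λ > 0. For every A > 0 and Q > 0 there exists a unique ∈ (0, π²/√(2Λ³)] such that, setting Q̂ = (Q/A)·Â, equality holds in Q̂² = (12/(64π²))·(Âπ/2)^{4/3} − 3ΛÂ²/(32π²). Moreover, the inequality Q² ≤ (12/(64π²))·(Aπ/2)^{4/3} − 3ΛA²/(32π²) holds if and only if A ≤ Â. -/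
open Real

/-!
Writing `κ = 12/(64π²)·(π/2)^{4/3}` and `d = 3Λ/(32π²)`, the relation `(qx)² ≤ κ x^{4/3} − d x²`
for `x > 0` and `q = Q/A` reads `(q² + d)·x² ≤ κ·x^{4/3}`, i.e. `(q² + d)·x^{2/3} ≤ κ` after
dividing by `x^{4/3}`. Since `x ↦ x^{2/3}` is strictly increasing, this holds exactly for
`x ≤ Â = (κ/(q² + d))^{3/2}`, with equality only at `x = Â`. The bound on `Â` is its value at
`q = 0`, which is `π²/√(2Λ³)`.
-/

section RpowFourThirds

variable {a c x : ℝ}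

lemma rpow_two_thirds_mul_rpow_four_thirds (hx : 0 < x) :
    x ^ ((2 : ℝ) / 3) * x ^ ((4 : ℝ) / 3) = x ^ 2 := by
  rw [← rpow_add hx, ← rpow_natCast]
  norm_num

lemma three_halves_eq_inv : (3 : ℝ) / 2 = ((2 : ℝ) / 3)⁻¹ := by norm_num

theorem mul_sq_le_mul_rpow_iff (ha : 0 < a) (hc : 0 ≤ c) (hx : 0 < x) :
    a * x ^ 2 ≤ c * x ^ ((4 : ℝ) / 3) ↔ x ≤ (c / a) ^ ((3 : ℝ) / 2) := by
  rw [← rpow_two_thirds_mul_rpow_four_thirds hx, ← mul_assoc,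
    mul_le_mul_iff_of_pos_right (by positivity), ← le_div_iff₀' ha, three_halves_eq_inv,
    le_rpow_inv_iff_of_pos hx.le (by positivity) (by norm_num)]

theorem mul_sq_eq_mul_rpow_iff (ha : 0 < a) (hc : 0 ≤ c) (hx : 0 < x) :
    a * x ^ 2 = c * x ^ ((4 : ℝ) / 3) ↔ x = (c / a) ^ ((3 : ℝ) / 2) := by
  rw [← rpow_two_thirds_mul_rpow_four_thirds hx, ← mul_assoc,
    mul_left_inj' (by positivity), mul_comm a, ← eq_div_iff ha.ne', three_halves_eq_inv,
    eq_rpow_inv hx.le (by positivity) (by norm_num)]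

end RpowFourThirds

noncomputable def areaChargeBound (Λ A : ℝ) : ℝ :=
  12 / (64 * π ^ 2) * (A * π / 2) ^ ((4 : ℝ) / 3) - 3 * Λ * A ^ 2 / (32 * π ^ 2)

/-- The area `Â` at which the curve `τ ↦ (τ, qτ)` meets the extreme black holes. -/
noncomputable def extremeArea (Λ q : ℝ) : ℝ :=
  (12 / (64 * π ^ 2) * (π / 2) ^ ((4 : ℝ) / 3) / (q ^ 2 + 3 * Λ / (32 * π ^ 2))) ^ ((3 : ℝ) / 2)

section ExtremeArea

variable {Λ x : ℝ}

lemma areaChargeBound_eq (hx : 0 ≤ x) :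
    areaChargeBound Λ x =
      12 / (64 * π ^ 2) * (π / 2) ^ ((4 : ℝ) / 3) * x ^ ((4 : ℝ) / 3)
        - 3 * Λ / (32 * π ^ 2) * x ^ 2 := by
  rw [areaChargeBound, mul_div_assoc, mul_rpow hx (by positivity)]
  ring

theorem sq_mul_le_areaChargeBound_iff (hΛ : 0 < Λ) (q : ℝ) (hx : 0 < x) :
    (q * x) ^ 2 ≤ areaChargeBound Λ x ↔ x ≤ extremeArea Λ q := by
  rw [areaChargeBound_eq hx.le, le_sub_iff_add_le, extremeArea,
    ← mul_sq_le_mul_rpow_iff (by positivity) (by positivity) hx]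
  ring_nf

theorem sq_mul_eq_areaChargeBound_iff (hΛ : 0 < Λ) (q : ℝ) (hx : 0 < x) :
    (q * x) ^ 2 = areaChargeBound Λ x ↔ x = extremeArea Λ q := by
  rw [areaChargeBound_eq hx.le, eq_sub_iff_add_eq, extremeArea,
    ← mul_sq_eq_mul_rpow_iff (by positivity) (by positivity) hx]
  ring_nf

lemma extremeArea_pos (hΛ : 0 < Λ) (q : ℝ) : 0 < extremeArea Λ q := by
  unfold extremeArea
  positivity

lemma extremeArea_le_extremeArea_zero (hΛ : 0 < Λ) (q : ℝ) :
    extremeArea Λ q ≤ extremeArea Λ 0 := by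
  unfold extremeArea
  gcongr (_ / ?_) ^ _
  rw [zero_pow two_ne_zero, zero_add]
  exact le_add_of_nonneg_left (sq_nonneg q)

lemma extremeArea_zero (hΛ : 0 < Λ) : extremeArea Λ 0 = π ^ 2 / √(2 * Λ ^ 3) := by
  set y := 12 / (64 * π ^ 2) * (π / 2) ^ ((4 : ℝ) / 3) / (0 ^ 2 + 3 * Λ / (32 * π ^ 2))
  have hy : 0 ≤ y := by positivity
  have hy_cube : y ^ 3 = π ^ 4 / (2 * Λ ^ 3) := by
    rw [div_pow, mul_pow, ← rpow_mul_natCast (by positivity)]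
    norm_num
    field_simp
    ring
  have h_sq : (y ^ ((3 : ℝ) / 2)) ^ 2 = y ^ 3 := by
    rw [← rpow_mul_natCast hy, ← rpow_natCast]
    norm_num
  rw [extremeArea, ← sq_eq_sq₀ (by positivity) (by positivity), h_sq, hy_cube, div_pow,
    sq_sqrt (by positivity)]
  ring

end ExtremeArea

theorem stmt1_general (Λ A Q : ℝ) (hΛ : 0 < Λ) (hA : 0 < A) :
    ∃ Ahat : ℝ, (0 < Ahat ∧ Ahat ≤ π ^ 2 / Real.sqrt (2 * Λ ^ 3)) ∧
      (Q / A * Ahat) ^ 2 =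
        12 / (64 * π ^ 2) * (Ahat * π / 2) ^ ((4 : ℝ) / 3) - 3 * Λ * Ahat ^ 2 / (32 * π ^ 2) ∧
      (∀ A' : ℝ, 0 < A' → A' ≤ π ^ 2 / Real.sqrt (2 * Λ ^ 3) →
        (Q / A * A') ^ 2 =
          12 / (64 * π ^ 2) * (A' * π / 2) ^ ((4 : ℝ) / 3) - 3 * Λ * A' ^ 2 / (32 * π ^ 2) →
        A' = Ahat) ∧
      (Q ^ 2 ≤ 12 / (64 * π ^ 2) * (A * π / 2) ^ ((4 : ℝ) / 3) - 3 * Λ * A ^ 2 / (32 * π ^ 2) ↔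
        A ≤ Ahat) := by
  have hpos := extremeArea_pos hΛ (Q / A)
  refine ⟨extremeArea Λ (Q / A),
    ⟨hpos, (extremeArea_le_extremeArea_zero hΛ _).trans_eq (extremeArea_zero hΛ)⟩,
    (sq_mul_eq_areaChargeBound_iff hΛ _ hpos).2 rfl,
    fun A' hA' _ h ↦ (sq_mul_eq_areaChargeBound_iff hΛ _ hA').1 h, ?_⟩
  have h := sq_mul_le_areaChargeBound_iff hΛ (Q / A) hA
  rwa [div_mul_cancel₀ Q hA.ne'] at h

/-- Lemma 7.1(b): existence and uniqueness of `Â ∈ (0, π²/√(2Λ³)]` saturating the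
area–charge relation along the curve `τ ↦ (τ, Qτ/A)`, and the inequality holds iff `A ≤ Â`. -/
theorem stmt1 (Λ A Q : ℝ) (hΛ : 0 < Λ) (hA : 0 < A) (hQ : 0 < Q) :
    ∃ Ahat : ℝ, (0 < Ahat ∧ Ahat ≤ π ^ 2 / Real.sqrt (2 * Λ ^ 3)) ∧
      (Q / A * Ahat) ^ 2 =
        12 / (64 * π ^ 2) * (Ahat * π / 2) ^ ((4 : ℝ) / 3) - 3 * Λ * Ahat ^ 2 / (32 * π ^ 2) ∧
      (∀ A' : ℝ, 0 < A' → A' ≤ π ^ 2 / Real.sqrt (2 * Λ ^ 3) →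
        (Q / A * A') ^ 2 =
          12 / (64 * π ^ 2) * (A' * π / 2) ^ ((4 : ℝ) / 3) - 3 * Λ * A' ^ 2 / (32 * π ^ 2) →
        A' = Ahat) ∧
      (Q ^ 2 ≤ 12 / (64 * π ^ 2) * (A * π / 2) ^ ((4 : ℝ) / 3) - 3 * Λ * A ^ 2 / (32 * π ^ 2) ↔
        A ≤ Ahat) :=
  stmt1_general Λ A Q hΛ hA
end

section
/- Let a, b, q be real numbers with q ≥ 0 and ab + q > 0. Set r₊ = √(ab + q), 𝔪 = q + (a+b)²/2, Q = (√3 π q)/4, 𝒥₁ = (π/4)(2a𝔪 + qb), 𝒥₂ = (π/4)(2b𝔪 + qa), and A = 8π²·(r₊⁴ + r₊²(a² + b²) + ab(ab + q))/(4r₊). Then π²𝒥₁𝒥₂ + (4π/(3√3))Q³ > 0 and A = 8√(π²𝒥₁𝒥₂ + (4π/(3√3))Q³). -/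
/-!
On the extreme horizon `r² = ab + q` both sides are governed by the single quantity
`X = π² r (q + (a + b)²) / 4`: the numerator of `A` factors as `r² (q + (a + b)²)`, so `A = 8X`,
while `π² 𝒥₁ 𝒥₂ + (4π/(3√3)) Q³ = X²`. Finally `X > 0` because `(a + b)² ≥ 4ab` and
`ab + q > 0`.
-/

open Real

lemma add_add_sq_pos_of_mul_add_pos {a b q : ℝ} (h : 0 < a * b + q) :
    0 < q + (a + b) ^ 2 := by
  nlinarith [sq_nonneg (a - b), sq_nonneg (a + b)]

lemma four_pi_div_three_sqrt_three_mul_cube (q : ℝ) :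
    4 * π / (3 * √3) * (√3 * π * q / 4) ^ 3 = π ^ 4 * q ^ 3 / 16 := by
  have h3 : √3 ^ 2 = 3 := sq_sqrt (by norm_num)
  have h3pos : 0 < √3 := sqrt_pos.mpr (by norm_num)
  field_simp
  linear_combination 16 * q ^ 3 * h3

section Horizon

variable {R : Type*} [CommRing R] {a b q r : R}

lemma area_numerator_eq (hr : r ^ 2 = a * b + q) :
    r ^ 4 + r ^ 2 * (a ^ 2 + b ^ 2) + a * b * (a * b + q) = r ^ 2 * (q + (a + b) ^ 2) := by
  linear_combination (r ^ 2 - a * b) * hr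

lemma angular_momenta_mul_add_cube_eq {m : R} (hr : r ^ 2 = a * b + q)
    (hm : 2 * m = 2 * q + (a + b) ^ 2) :
    (2 * a * m + q * b) * (2 * b * m + q * a) + q ^ 3 = (r * (q + (a + b) ^ 2)) ^ 2 := by
  linear_combination (-(q + (a + b) ^ 2) ^ 2) * hr + (a * b * (2 * m + 2 * q + (a + b) ^ 2)
    + q * (a ^ 2 + b ^ 2)) * hm

end Horizon

theorem stmt2_general (a b q r m Q J1 J2 A : ℝ)
    (habq : 0 < a * b + q)
    (hr : r = Real.sqrt (a * b + q))
    (hm : m = q + (a + b) ^ 2 / 2)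
    (hQ : Q = Real.sqrt 3 * π * q / 4)
    (hJ1 : J1 = π / 4 * (2 * a * m + q * b))
    (hJ2 : J2 = π / 4 * (2 * b * m + q * a))
    (hA : A = 8 * π ^ 2 * (r ^ 4 + r ^ 2 * (a ^ 2 + b ^ 2) + a * b * (a * b + q)) / (4 * r)) :
    0 < π ^ 2 * J1 * J2 + 4 * π / (3 * Real.sqrt 3) * Q ^ 3 ∧
      A = 8 * Real.sqrt (π ^ 2 * J1 * J2 + 4 * π / (3 * Real.sqrt 3) * Q ^ 3) := by
  have hr2 : r ^ 2 = a * b + q := by rw [hr, sq_sqrt habq.le]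
  have hr_pos : 0 < r := hr ▸ sqrt_pos.mpr habq
  have hX_pos : 0 < π ^ 2 * r * (q + (a + b) ^ 2) / 4 := by
    have := add_add_sq_pos_of_mul_add_pos habq
    positivity
  have hsq : π ^ 2 * J1 * J2 + 4 * π / (3 * √3) * Q ^ 3
      = (π ^ 2 * r * (q + (a + b) ^ 2) / 4) ^ 2 := by
    rw [hQ, four_pi_div_three_sqrt_three_mul_cube, hJ1, hJ2]
    have h2m : 2 * m = 2 * q + (a + b) ^ 2 := by linear_combination 2 * hm
    linear_combination π ^ 4 / 16 * angular_momenta_mul_add_cube_eq hr2 h2m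
  refine ⟨hsq ▸ by positivity, ?_⟩
  rw [hsq, sqrt_sq hX_pos.le, hA, area_numerator_eq hr2]
  field_simp

/-- The extreme charged Myers–Perry (CCLP, Λ = 0) black hole saturates the
area–angular momenta–charge inequality of Theorem 2.1. -/
theorem stmt2 (a b q r m Q J1 J2 A : ℝ)
    (hq : 0 ≤ q) (habq : 0 < a * b + q)
    (hr : r = Real.sqrt (a * b + q))
    (hm : m = q + (a + b) ^ 2 / 2)
    (hQ : Q = Real.sqrt 3 * π * q / 4)
    (hJ1 : J1 = π / 4 * (2 * a * m + q * b))
    (hJ2 : J2 = π / 4 * (2 * b * m + q * a))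
    (hA : A = 8 * π ^ 2 * (r ^ 4 + r ^ 2 * (a ^ 2 + b ^ 2) + a * b * (a * b + q)) / (4 * r)) :
    0 < π ^ 2 * J1 * J2 + 4 * π / (3 * Real.sqrt 3) * Q ^ 3 ∧
      A = 8 * Real.sqrt (π ^ 2 * J1 * J2 + 4 * π / (3 * Real.sqrt 3) * Q ^ 3) :=
  stmt2_general a b q r m Q J1 J2 A habq hr hm hQ hJ1 hJ2 hA
end

section
/- Let Λ > 0, q ≥ 0 and R₊ > 0 satisfy 2ΛR₊³ = R₊² − q². Set A = 2π²R₊^{3/2} and Q = (√3 π q)/4. Then A ≤ π²/√(2Λ³) with equality if and only if q = 0, and Q ≤ π/(12Λ) with equality if and only if R₊ = 1/(3Λ). -/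
open Real

private lemma sq_le_one_of (x : ℝ) (h0 : 0 ≤ x) (h2 : x ^ 2 ≤ 1) : x ≤ 1 := by
  nlinarith [h2, h0]

set_option maxHeartbeats 1600000 in
/-- Bounds `A ≤ π²/√(2Λ³)` (equality iff `q = 0`) and `Q ≤ π/(12Λ)` (equality iff
`R₊ = 1/(3Λ)`) for the extreme Reissner–Nordström–de Sitter family of Appendix A. -/
theorem stmt6 (Λ q R A Q : ℝ) (hΛ : 0 < Λ) (hq : 0 ≤ q) (hR : 0 < R)
    (hext : 2 * Λ * R ^ 3 = R ^ 2 - q ^ 2)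
    (hA : A = 2 * π ^ 2 * R ^ ((3 : ℝ) / 2))
    (hQ : Q = Real.sqrt 3 * π * q / 4) :
    (A ≤ π ^ 2 / Real.sqrt (2 * Λ ^ 3) ∧ (A = π ^ 2 / Real.sqrt (2 * Λ ^ 3) ↔ q = 0)) ∧
    (Q ≤ π / (12 * Λ) ∧ (Q = π / (12 * Λ) ↔ R = 1 / (3 * Λ))) := by
  have hπ : (0:ℝ) < π := Real.pi_pos
  have hs : (0:ℝ) < Real.sqrt (2 * Λ ^ 3) := Real.sqrt_pos.mpr (by positivity)
  set s := Real.sqrt (2 * Λ ^ 3) with hsdef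
  -- 2ΛR ≤ 1
  have hu : 2 * Λ * R ≤ 1 := by
    nlinarith [sq_nonneg q, sq_nonneg R, mul_pos hR hR]
  have hu0 : 0 < 2 * Λ * R := by positivity
  -- rewrite A using sqrt
  have hR32 : R ^ ((3:ℝ)/2) = Real.sqrt (R ^ 3) := by
    rw [Real.sqrt_eq_rpow, ← Real.rpow_natCast R 3, ← Real.rpow_mul hR.le]
    norm_num
  have hAs : A * s = π ^ 2 * Real.sqrt ((2*Λ*R)^3) := by
    have h1 : (2*Λ*R)^3 = 4 * (R^3 * (2 * Λ^3)) := by ring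
    rw [hA, hR32, hsdef, h1, Real.sqrt_mul (by norm_num : (0:ℝ) ≤ 4),
      Real.sqrt_mul (by positivity : (0:ℝ) ≤ R^3),
      show Real.sqrt 4 = 2 by rw [show (4:ℝ) = 2^2 by norm_num, Real.sqrt_sq (by norm_num : (0:ℝ) ≤ 2)]]
    ring
  have hcube : (2*Λ*R)^3 ≤ 1 := by nlinarith [sq_nonneg (2*Λ*R)]
  have hsq1 : Real.sqrt ((2*Λ*R)^3) ≤ 1 := by
    rw [show (1:ℝ) = Real.sqrt 1 by simp]
    exact Real.sqrt_le_sqrt hcube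
  constructor
  · constructor
    · rw [le_div_iff₀ hs]
      calc A * s = π ^ 2 * Real.sqrt ((2*Λ*R)^3) := hAs
        _ ≤ π ^ 2 * 1 := by nlinarith
        _ = π ^ 2 := by ring
    · constructor
      · intro h
        have h1 : A * s = π ^ 2 := by
          rw [h]; field_simp
        have h2 : Real.sqrt ((2*Λ*R)^3) = 1 := by
          have hx := hAs
          rw [h1] at hx
          have hy : π ^ 2 * Real.sqrt ((2*Λ*R)^3) = π ^ 2 * 1 := by rw [← hx]; ring
          exact mul_left_cancel₀ (by positivity) hy
        have h3 : (2*Λ*R)^3 = 1 := by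
          have := Real.sq_sqrt (by positivity : (0:ℝ) ≤ (2*Λ*R)^3)
          rw [h2] at this
          nlinarith
        have h4 : 2*Λ*R = 1 := by nlinarith [sq_nonneg (2*Λ*R - 1), sq_nonneg (2*Λ*R + 1)]
        have h5 : q ^ 2 = 0 := by nlinarith
        exact pow_eq_zero_iff (by norm_num) |>.mp h5
      · intro h
        have h4 : 2*Λ*R = 1 := by
          have : q ^ 2 = 0 := by rw [h]; ring
          have h5 : 2 * Λ * R ^ 3 = R ^ 2 := by rw [hext, this]; ring
          have : R^2 * (2*Λ*R) = R^2 * 1 := by linear_combination h5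
          exact mul_left_cancel₀ (by positivity) this
        have h3 : (2*Λ*R)^3 = 1 := by rw [h4]; norm_num
        have h2 : Real.sqrt ((2*Λ*R)^3) = 1 := by rw [h3, Real.sqrt_one]
        have h1 : A * s = π ^ 2 := by rw [hAs, h2]; ring
        rw [eq_div_iff hs.ne']
        exact h1
  · -- Q part
    have ht : Real.sqrt 3 ^ 2 = 3 := Real.sq_sqrt (by norm_num)
    have ht0 : (0:ℝ) < Real.sqrt 3 := Real.sqrt_pos.mpr (by norm_num)
    set t := Real.sqrt 3 with htdef
    have hkey : 27 * Λ^2 * q^2 ≤ 1 := by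
      nlinarith [mul_nonneg (sq_nonneg (3*Λ*R - 1)) (by positivity : (0:ℝ) ≤ 6*Λ*R + 1)]
    have hxnn : 0 ≤ 3 * t * Λ * q := by positivity
    have hx2 : (3 * t * Λ * q) ^ 2 = 27 * Λ^2 * q^2 := by
      linear_combination (9 * Λ^2 * q^2) * ht
    have hq1 : 3 * t * Λ * q ≤ 1 :=
      sq_le_one_of _ hxnn (by rw [hx2]; exact hkey)
    constructor
    · rw [hQ, div_le_div_iff₀ (by norm_num) (by positivity)]
      have := mul_le_mul_of_nonneg_left hq1 hπ.le
      linarith [this]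
    · constructor
      · intro h
        have h12 : (12:ℝ) * Λ ≠ 0 := by positivity
        rw [hQ, div_eq_div_iff (by norm_num) (by positivity)] at h
        have he : 3 * t * Λ * q = 1 := by
          have hy : π * (3 * t * Λ * q) = π * 1 := by linear_combination (1/4) * h
          exact mul_left_cancel₀ hπ.ne' hy
        have hq27 : 27 * Λ^2 * q^2 = 1 := by rw [← hx2, he]; norm_num
        have hfac : (3*Λ*R - 1)^2 * (6*Λ*R + 1) = 0 := by
          linear_combination 27*Λ^2*hext - hq27
        have hz : 3*Λ*R - 1 = 0 := by
          rcases mul_eq_zero.mp hfac with h1 | h1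
          · exact pow_eq_zero_iff (by norm_num) |>.mp h1
          · exfalso; nlinarith [h1]
        rw [eq_div_iff (by positivity : (3:ℝ)*Λ ≠ 0)]
        linarith
      · intro h
        have hΛR : 3 * Λ * R = 1 := by
          rw [h]; field_simp
        have hq27 : 27 * Λ^2 * q^2 = 1 := by
          linear_combination 27*Λ^2*hext + (-(3*Λ*R-1)*(6*Λ*R+1))*hΛR
        have hx1 : 3 * t * Λ * q = 1 := by
          have h1 : (3 * t * Λ * q) ^ 2 = 1 := by rw [hx2]; exact hq27
          have h2 : (3*t*Λ*q - 1) * (3*t*Λ*q + 1) = 0 := by linear_combination h1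
          rcases mul_eq_zero.mp h2 with h3 | h3
          · linarith
          · exfalso; nlinarith [h3, hxnn]
        rw [hQ, eq_div_iff (by positivity : (12:ℝ)*Λ ≠ 0)]
        linear_combination π * hx1
end

section
/- Let Λ > 0 and for R ∈ (0, 1/(2Λ)] define A(R) = 8π²R^{3/2}/(1 + 2ΛR)² and 𝒥(R) = πR^{3/2}√(1 − 2ΛR)/(1 + 2ΛR)³. Then A is strictly increasing on (0, 1/(2Λ)], so that A(R) ≤ π²/√(2Λ³) with equality if and only if R = 1/(2Λ); and 𝒥(R) ≤ √2·π/(54Λ^{3/2}) with equality if and only if R = 1/(4Λ), at which point A(1/(4Λ)) = 4π²/(9Λ^{3/2}). -/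
open Real

private lemma sq32 {x : ℝ} (hx : 0 ≤ x) : (x ^ ((3 : ℝ) / 2)) ^ 2 = x ^ 3 := by
  rw [← Real.rpow_natCast (x ^ ((3 : ℝ) / 2)) 2, ← Real.rpow_mul hx,
    ← Real.rpow_natCast x 3]
  norm_num

private lemma sqeq {a b : ℝ} (ha : 0 ≤ a) (hb : 0 ≤ b) (h : a ^ 2 = b ^ 2) : a = b := by
  rw [← Real.sqrt_sq ha, ← Real.sqrt_sq hb, h]

private lemma aux1 {u v : ℝ} (hu : 0 < u) (huv : u < v) (hv : v ≤ 1) :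
    u ^ 3 * (1 + v) ^ 4 < v ^ 3 * (1 + u) ^ 4 := by
  have hv0 : 0 < v := hu.trans huv
  have huv1 : u * v ≤ 1 := by nlinarith
  have hQ : 0 < u ^ 2 + u * v + v ^ 2 + 4 * u ^ 2 * v + 4 * u * v ^ 2 + 6 * u ^ 2 * v ^ 2
      - u ^ 3 * v ^ 3 := by nlinarith [mul_pos hu hv0, mul_pos (mul_pos hu hv0) (mul_pos hu hv0)]
  nlinarith [mul_pos (sub_pos.2 huv) hQ]

private lemma aux2 {t : ℝ} (ht0 : 0 < t) (ht1 : t ≤ 1) :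
    729 * t ^ 3 * (1 - t) ≤ 4 * (1 + t) ^ 6 := by
  have hQ : 0 < t ^ 4 + 7 * t ^ 3 + 204 * t ^ 2 + 40 * t + 4 := by positivity
  nlinarith [mul_nonneg (sq_nonneg (2 * t - 1)) hQ.le]

private lemma aux3 {t : ℝ} (ht0 : 0 < t)
    (h : 729 * t ^ 3 * (1 - t) = 4 * (1 + t) ^ 6) : t = 1 / 2 := by
  have hQ : 0 < t ^ 4 + 7 * t ^ 3 + 204 * t ^ 2 + 40 * t + 4 := by positivity
  have h2 : (2 * t - 1) ^ 2 * (t ^ 4 + 7 * t ^ 3 + 204 * t ^ 2 + 40 * t + 4) = 0 := by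
    linear_combination -h
  rcases mul_eq_zero.mp h2 with h3 | h3
  · have := pow_eq_zero_iff (n := 2) (by norm_num) |>.mp h3
    linarith
  · linarith

/-- Bounds on the horizon area and angular momentum of the extreme CCLP black hole with
positive cosmological constant, equal rotation parameters and vanishing charge:
`A` is strictly increasing in `R` on `(0, 1/(2Λ)]`, `A(R) ≤ π²/√(2Λ³)` with equality iff
`R = 1/(2Λ)`, `𝒥(R) ≤ √2π/(54Λ^{3/2})` with equality iff `R = 1/(4Λ)`, and
`A(1/(4Λ)) = 4π²/(9Λ^{3/2})`. -/
theorem stmt8 (Λ : ℝ) (hΛ : 0 < Λ) :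
    StrictMonoOn (fun R : ℝ => 8 * π ^ 2 * R ^ ((3 : ℝ) / 2) / (1 + 2 * Λ * R) ^ 2)
      (Set.Ioc 0 (1 / (2 * Λ))) ∧
    (∀ R ∈ Set.Ioc (0 : ℝ) (1 / (2 * Λ)),
      8 * π ^ 2 * R ^ ((3 : ℝ) / 2) / (1 + 2 * Λ * R) ^ 2 ≤ π ^ 2 / Real.sqrt (2 * Λ ^ 3) ∧
      (8 * π ^ 2 * R ^ ((3 : ℝ) / 2) / (1 + 2 * Λ * R) ^ 2 = π ^ 2 / Real.sqrt (2 * Λ ^ 3) ↔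
        R = 1 / (2 * Λ))) ∧
    (∀ R ∈ Set.Ioc (0 : ℝ) (1 / (2 * Λ)),
      π * R ^ ((3 : ℝ) / 2) * Real.sqrt (1 - 2 * Λ * R) / (1 + 2 * Λ * R) ^ 3 ≤
        Real.sqrt 2 * π / (54 * Λ ^ ((3 : ℝ) / 2)) ∧
      (π * R ^ ((3 : ℝ) / 2) * Real.sqrt (1 - 2 * Λ * R) / (1 + 2 * Λ * R) ^ 3 =
          Real.sqrt 2 * π / (54 * Λ ^ ((3 : ℝ) / 2)) ↔ R = 1 / (4 * Λ))) ∧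
    8 * π ^ 2 * (1 / (4 * Λ)) ^ ((3 : ℝ) / 2) / (1 + 2 * Λ * (1 / (4 * Λ))) ^ 2 =
      4 * π ^ 2 / (9 * Λ ^ ((3 : ℝ) / 2)) := by
  have hΛ2 : (0 : ℝ) < 2 * Λ := by linarith
  have hΛne : Λ ≠ 0 := hΛ.ne'
  -- Part 1: strict monotonicity
  have mono : StrictMonoOn (fun R : ℝ => 8 * π ^ 2 * R ^ ((3 : ℝ) / 2) / (1 + 2 * Λ * R) ^ 2)
      (Set.Ioc 0 (1 / (2 * Λ))) := by
    intro x hx y hy hxy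
    simp only
    have hx0 : 0 < x := hx.1
    have hy0 : 0 < y := hy.1
    have hy1 : 2 * Λ * y ≤ 1 := by
      have := (le_div_iff₀ hΛ2).mp hy.2; linarith
    have hx1 : 2 * Λ * x ≤ 1 := by nlinarith
    rw [div_lt_div_iff₀ (by positivity) (by positivity)]
    have key : x ^ ((3 : ℝ) / 2) * (1 + 2 * Λ * y) ^ 2
        < y ^ ((3 : ℝ) / 2) * (1 + 2 * Λ * x) ^ 2 := by
      apply lt_of_pow_lt_pow_left₀ 2 (by positivity)
      rw [mul_pow, mul_pow, sq32 hx0.le, sq32 hy0.le]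
      have h := aux1 (u := 2 * Λ * x) (v := 2 * Λ * y) (by positivity)
        (by nlinarith) hy1
      refine lt_of_mul_lt_mul_left ?_ (show (0:ℝ) ≤ 8 * Λ ^ 3 by positivity)
      linarith [h]
    nlinarith [mul_lt_mul_of_pos_left key (show (0:ℝ) < 8 * π ^ 2 by positivity)]
  refine ⟨mono, ?_, ?_, ?_⟩
  · -- Part 2
    have hend : (1 / (2 * Λ)) ∈ Set.Ioc (0 : ℝ) (1 / (2 * Λ)) := ⟨by positivity, le_refl _⟩
    have hAend : 8 * π ^ 2 * (1 / (2 * Λ)) ^ ((3 : ℝ) / 2) / (1 + 2 * Λ * (1 / (2 * Λ))) ^ 2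
        = π ^ 2 / Real.sqrt (2 * Λ ^ 3) := by
      apply sqeq (by positivity) (by positivity)
      rw [div_pow, div_pow, mul_pow, mul_pow, sq32 (by positivity), Real.sq_sqrt (by positivity)]
      field_simp
      ring
    intro R hR
    have hle : 8 * π ^ 2 * R ^ ((3 : ℝ) / 2) / (1 + 2 * Λ * R) ^ 2
        ≤ π ^ 2 / Real.sqrt (2 * Λ ^ 3) := by
      rcases eq_or_lt_of_le hR.2 with h | h
      · subst h; exact le_of_eq hAend
      · have h2 := mono hR hend h
        simp only at h2
        rw [hAend] at h2
        exact h2.le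
    refine ⟨hle, ?_, fun h => by rw [h]; exact hAend⟩
    intro hEq
    by_contra hne
    have h : R < 1 / (2 * Λ) := lt_of_le_of_ne hR.2 hne
    have h2 := mono hR hend h
    simp only at h2
    rw [hAend] at h2
    linarith [hEq.le, hEq.ge, h2]
  · -- Part 3
    intro R hR
    have hR0 : 0 < R := hR.1
    have ht1 : 2 * Λ * R ≤ 1 := by
      have := (le_div_iff₀ hΛ2).mp hR.2; linarith
    have ht0 : 0 < 2 * Λ * R := by positivity
    have h1t : (0 : ℝ) ≤ 1 - 2 * Λ * R := by linarith
    have hle : π * R ^ ((3 : ℝ) / 2) * Real.sqrt (1 - 2 * Λ * R) / (1 + 2 * Λ * R) ^ 3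
        ≤ Real.sqrt 2 * π / (54 * Λ ^ ((3 : ℝ) / 2)) := by
      apply le_of_pow_le_pow_left₀ two_ne_zero (by positivity)
      rw [div_pow, div_pow, mul_pow, mul_pow, mul_pow, mul_pow, sq32 hR0.le, sq32 hΛ.le,
        Real.sq_sqrt h1t, Real.sq_sqrt (by norm_num : (0:ℝ) ≤ 2)]
      rw [div_le_div_iff₀ (by positivity) (by positivity)]
      nlinarith [mul_le_mul_of_nonneg_left (aux2 ht0 ht1) (sq_nonneg π)]
    refine ⟨hle, ?_, ?_⟩
    · intro hEq
      have hsq : (π * R ^ ((3 : ℝ) / 2) * Real.sqrt (1 - 2 * Λ * R) / (1 + 2 * Λ * R) ^ 3) ^ 2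
          = (Real.sqrt 2 * π / (54 * Λ ^ ((3 : ℝ) / 2))) ^ 2 := by rw [hEq]
      rw [div_pow, div_pow, mul_pow, mul_pow, mul_pow, mul_pow, sq32 hR0.le, sq32 hΛ.le,
        Real.sq_sqrt h1t, Real.sq_sqrt (by norm_num : (0:ℝ) ≤ 2),
        div_eq_div_iff (by positivity) (by positivity)] at hsq
      have h729 : 729 * (2 * Λ * R) ^ 3 * (1 - 2 * Λ * R) = 4 * (1 + 2 * Λ * R) ^ 6 := by
        have hπ2 : (π ^ 2 : ℝ) ≠ 0 := by positivity
        apply mul_left_cancel₀ hπ2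
        nlinarith [hsq]
      have ht := aux3 ht0 h729
      field_simp
      linarith
    · intro h
      subst h
      have e1 : 2 * Λ * (1 / (4 * Λ)) = 1 / 2 := by field_simp; ring
      rw [e1]
      apply sqeq (by positivity) (by positivity)
      rw [div_pow, div_pow, mul_pow, mul_pow, mul_pow, mul_pow, sq32 (by positivity),
        sq32 hΛ.le, Real.sq_sqrt (by norm_num : (0:ℝ) ≤ 1 - 1/2),
        Real.sq_sqrt (by norm_num : (0:ℝ) ≤ 2)]
      field_simp
      ring
  · -- Part 4
    apply sqeq (by positivity) (by positivity)
    simp only [div_pow, mul_pow]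
    rw [sq32 (show (0:ℝ) ≤ 1 / (4 * Λ) by positivity), sq32 hΛ.le]
    field_simp
    ring
end

section
/- Let μ ∈ (0, 1) and R₁, R₂ > 0. Set σ = μ(3 + μ²)/(1 + 3μ²), ω₀ = √((1 − μ²)³/(1 + 3μ²)), L³ = ω₀·R₁·R₂²·√(σ(1 + σ)μ³/(1 − σ)), 𝒟 = 2√3·μ·R₂·(1 − μ²)/√(1 + 3μ²), 𝒥₁ = (π/2)·(L³R₁/((1 − σ)R₂))·√(σ/μ³), and A = 8π²L³. Then A = 4π·√(π𝒥₁𝒟³/(3√3)). -/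
open Real

/-!
The balance condition factors as `1 ∓ σ = (1 ∓ μ)³ / (1 + 3μ²)`, so
`(1 - σ)(1 + σ)(1 + 3μ²)² = (1 - μ²)³`. This collapses the product of square roots in `L³` to
`L³ (1 - σ)(1 + 3μ²)^{3/2} = R₁R₂² √(σ/μ³) μ³ (1 - μ²)³`. Using it for one factor `L³` inside
`𝒥₁𝒟³` turns the radicand `π𝒥₁𝒟³/(3√3)` into `(2πL³)²`, so the right-hand side is `8π²L³ = A`.
-/

section Balance

variable {μ σ : ℝ}

lemma one_sub_balance (hσ : σ = μ * (3 + μ ^ 2) / (1 + 3 * μ ^ 2)) :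
    1 - σ = (1 - μ) ^ 3 / (1 + 3 * μ ^ 2) := by
  have : 0 < 1 + 3 * μ ^ 2 := by positivity
  rw [hσ]; field_simp; ring

lemma one_add_balance (hσ : σ = μ * (3 + μ ^ 2) / (1 + 3 * μ ^ 2)) :
    1 + σ = (1 + μ) ^ 3 / (1 + 3 * μ ^ 2) := by
  have : 0 < 1 + 3 * μ ^ 2 := by positivity
  rw [hσ]; field_simp; ring

lemma one_sub_mul_one_add_balance (hσ : σ = μ * (3 + μ ^ 2) / (1 + 3 * μ ^ 2)) :
    (1 - σ) * (1 + σ) * (1 + 3 * μ ^ 2) ^ 2 = (1 - μ ^ 2) ^ 3 := by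
  have : 0 < 1 + 3 * μ ^ 2 := by positivity
  rw [one_sub_balance hσ, one_add_balance hσ]; field_simp; ring

lemma one_sub_balance_pos (hσ : σ = μ * (3 + μ ^ 2) / (1 + 3 * μ ^ 2)) (hμ : μ < 1) :
    0 < 1 - σ := by
  have : 0 < 1 - μ := sub_pos.mpr hμ
  rw [one_sub_balance hσ]
  positivity

lemma sqrt_mul_sqrt_balance (hσ : σ = μ * (3 + μ ^ 2) / (1 + 3 * μ ^ 2))
    (hμ0 : 0 < μ) (hμ1 : μ < 1) :
    √((1 - μ ^ 2) ^ 3 / (1 + 3 * μ ^ 2)) * √(σ * (1 + σ) * μ ^ 3 / (1 - σ)) *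
      ((1 - σ) * √(1 + 3 * μ ^ 2) ^ 3) = √(σ / μ ^ 3) * μ ^ 3 * (1 - μ ^ 2) ^ 3 := by
  have hσ0 : 0 < σ := by rw [hσ]; positivity
  have h1σ : 0 < 1 - σ := one_sub_balance_pos hσ hμ1
  have hμ2 : 0 < 1 - μ ^ 2 := by nlinarith
  rw [← eq_div_iff (by positivity)]
  refine (sq_eq_sq₀ (by positivity) (by positivity)).mp ?_
  simp only [mul_pow, div_pow]
  rw [sq_sqrt (by positivity), sq_sqrt (by positivity), sq_sqrt (by positivity),
    pow_right_comm √(1 + 3 * μ ^ 2) 3 2, sq_sqrt (by positivity)]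
  field_simp
  linear_combination one_sub_mul_one_add_balance hσ

end Balance

/-- The extreme singly-spinning dipole black ring saturates the area–angular
momentum–dipole charge inequality of Theorem 2.2(a): `A = 4π√(π𝒥₁𝒟³/(3√3))`. -/
theorem stmt10 (μ R1 R2 σ ω L3 D J1 A : ℝ)
    (hμ : μ ∈ Set.Ioo (0 : ℝ) 1) (hR1 : 0 < R1) (hR2 : 0 < R2)
    (hσ : σ = μ * (3 + μ ^ 2) / (1 + 3 * μ ^ 2))
    (hω : ω = Real.sqrt ((1 - μ ^ 2) ^ 3 / (1 + 3 * μ ^ 2)))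
    (hL : L3 = ω * R1 * R2 ^ 2 * Real.sqrt (σ * (1 + σ) * μ ^ 3 / (1 - σ)))
    (hD : D = 2 * Real.sqrt 3 * μ * R2 * (1 - μ ^ 2) / Real.sqrt (1 + 3 * μ ^ 2))
    (hJ : J1 = π / 2 * (L3 * R1 / ((1 - σ) * R2)) * Real.sqrt (σ / μ ^ 3))
    (hA : A = 8 * π ^ 2 * L3) :
    A = 4 * π * Real.sqrt (π * J1 * D ^ 3 / (3 * Real.sqrt 3)) := by
  obtain ⟨hμ0, hμ1⟩ := hμ
  have h1σ := one_sub_balance_pos hσ hμ1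
  have hL3 : L3 * ((1 - σ) * √(1 + 3 * μ ^ 2) ^ 3) =
      R1 * R2 ^ 2 * (√(σ / μ ^ 3) * μ ^ 3 * (1 - μ ^ 2) ^ 3) := by
    rw [hL, hω]
    linear_combination (R1 * R2 ^ 2) * sqrt_mul_sqrt_balance hσ hμ0 hμ1
  have hrad : π * J1 * D ^ 3 / (3 * √3) = (2 * π * L3) ^ 2 := by
    rw [hJ, hD]
    set u := √(1 + 3 * μ ^ 2)
    have hu : 0 < u := by positivity
    field_simp
    linear_combination (-3 * L3) * hL3 +
      (L3 * R1 * R2 ^ 2 * μ ^ 3 * √(σ / μ ^ 3) * (1 - μ ^ 2) ^ 3) * sq_sqrt (zero_le_three (α := ℝ))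
  rw [hrad, sqrt_sq (by rw [hL, hω]; positivity), hA]
  ring
end

section
/- Let a, R > 0 and β ∈ ℝ, and write c = cosh β, s = sinh β. Set 𝒥₁ = −πaR²cs, 𝒥₂ = −2πa²R(c² + s²), 𝒟 = 4√3·a·c·s, and A = 16π²a²R(c⁴ + s⁴). Then 𝒥₂² − (π/(12√3))𝒥₁𝒟³ ≥ 0 and A = 8π·√(𝒥₂² − (π/(12√3))𝒥₁𝒟³). -/
open Real

/- With `c = cosh β`, `s = sinh β`, the quantity under the square root is
`4π²a⁴R²((c² + s²)² + 4c⁴s⁴)`. Since `(c⁴ + s⁴)² − 4c⁴s⁴ = (c⁴ − s⁴)² = (c² + s²)²(c² − s²)²`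
and `c² − s² = 1`, the bracket is the perfect square `(c⁴ + s⁴)²`, whose root gives `A / (8π)`. -/

theorem sq_pow_four_add_pow_four_of_sq_sub_sq_eq_one {α : Type*} [CommRing α] {c s : α}
    (h : c ^ 2 - s ^ 2 = 1) :
    (c ^ 4 + s ^ 4) ^ 2 = (c ^ 2 + s ^ 2) ^ 2 + 4 * c ^ 4 * s ^ 4 := by
  linear_combination ((c ^ 2 + s ^ 2) ^ 2 * (c ^ 2 - s ^ 2 + 1)) * h

theorem pi_div_mul_angularMomentum_mul_dipole_pow_three (a R c s : ℝ) :
    π / (12 * √3) * (π * a * R ^ 2 * c * s) * (4 * √3 * a * c * s) ^ 3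
      = 16 * π ^ 2 * a ^ 4 * R ^ 2 * c ^ 4 * s ^ 4 := by
  have h3 : √3 ^ 2 = 3 := sq_sqrt (by norm_num)
  field_simp
  linear_combination (64 * a ^ 4 * R ^ 2 * c ^ 4 * s ^ 4) * h3

theorem blackString_discriminant_eq_sq (a R c s : ℝ) (h : c ^ 2 - s ^ 2 = 1) :
    (-(2 * π * a ^ 2 * R * (c ^ 2 + s ^ 2))) ^ 2
        - π / (12 * √3) * -(π * a * R ^ 2 * c * s) * (4 * √3 * a * c * s) ^ 3
      = (2 * π * a ^ 2 * R * (c ^ 4 + s ^ 4)) ^ 2 := by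
  linear_combination pi_div_mul_angularMomentum_mul_dipole_pow_three a R c s
    - 4 * π ^ 2 * a ^ 4 * R ^ 2 * sq_pow_four_add_pow_four_of_sq_sub_sq_eq_one h

theorem stmt11_general (a R β c s J1 J2 D A : ℝ) (hR : 0 < R)
    (hc : c = Real.cosh β) (hs : s = Real.sinh β)
    (hJ1 : J1 = -(π * a * R ^ 2 * c * s))
    (hJ2 : J2 = -(2 * π * a ^ 2 * R * (c ^ 2 + s ^ 2)))
    (hD : D = 4 * Real.sqrt 3 * a * c * s)
    (hA : A = 16 * π ^ 2 * a ^ 2 * R * (c ^ 4 + s ^ 4)) :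
    0 ≤ J2 ^ 2 - π / (12 * Real.sqrt 3) * J1 * D ^ 3 ∧
      A = 8 * π * Real.sqrt (J2 ^ 2 - π / (12 * Real.sqrt 3) * J1 * D ^ 3) := by
  have hcs : c ^ 2 - s ^ 2 = 1 := by rw [hc, hs]; exact cosh_sq_sub_sinh_sq β
  have hroot : 0 ≤ 2 * π * a ^ 2 * R * (c ^ 4 + s ^ 4) := by positivity
  rw [hJ1, hJ2, hD, blackString_discriminant_eq_sq a R c s hcs, sqrt_sq hroot, hA]
  exact ⟨sq_nonneg _, by ring⟩

/-- The extreme magnetically charged boosted Kerr black string saturates the inequality of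
Theorem 2.2(b): `A = 8π√(𝒥₂² − (π/(12√3))𝒥₁𝒟³)`. -/
theorem stmt11 (a R β c s J1 J2 D A : ℝ) (ha : 0 < a) (hR : 0 < R)
    (hc : c = Real.cosh β) (hs : s = Real.sinh β)
    (hJ1 : J1 = -(π * a * R ^ 2 * c * s))
    (hJ2 : J2 = -(2 * π * a ^ 2 * R * (c ^ 2 + s ^ 2)))
    (hD : D = 4 * Real.sqrt 3 * a * c * s)
    (hA : A = 16 * π ^ 2 * a ^ 2 * R * (c ^ 4 + s ^ 4)) :
    0 ≤ J2 ^ 2 - π / (12 * Real.sqrt 3) * J1 * D ^ 3 ∧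
      A = 8 * π * Real.sqrt (J2 ^ 2 - π / (12 * Real.sqrt 3) * J1 * D ^ 3) :=
  stmt11_general a R β c s J1 J2 D A hR hc hs hJ1 hJ2 hD hA
end

section
/- Let s ∈ {0, 1} and let ξ, V : (0, π) → ℝ be differentiable with ξ > 0. Define h₁(θ) = (1/2)·log sin θ, h₂(θ) = log tan(θ/2), v = V + h₂, V_s = V + 2s·h₁ + s·h₂, and c_s(θ) = 2s·cos²(θ/2) − 1. Then for all θ ∈ (0, π): ξ·(∂_θ V_s)² = ξ·(∂_θ v)² − ξ·c_s²·(∂_θ h₂)² + 2·∂_θ(ξ·c_s·V_s)·∂_θ h₂ − 2·V_s·∂_θ(ξ·c_s)·∂_θ h₂, where ∂_θ h₂ = 1/sin θ. -/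
/-!
Both sides are quadratic in the derivatives, so the identity is algebra once two facts are known.
First, `∂h₁ = cot θ / 2` and `∂h₂ = 1 / sin θ`, and `cos θ = 2 cos² (θ/2) - 1` turns
`2s ∂h₁ + (s - 1) ∂h₂` into `c_s ∂h₂`, i.e. `∂V_s = ∂v + c_s ∂h₂`.
Second, by the product rule `∂(ξ c_s V_s) - V_s ∂(ξ c_s) = ξ c_s ∂V_s`.
Substituting both and expanding the square gives the identity.
-/

open Real Set

theorem Real.hasDerivAt_log_tan_half {θ : ℝ} (hθ : θ ∈ Ioo 0 π) :
    HasDerivAt (fun t => log (tan (t / 2))) (1 / sin θ) θ := by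
  obtain ⟨hθ0, hθπ⟩ := hθ
  have hcos : 0 < cos (θ / 2) := cos_pos_of_mem_Ioo ⟨by linarith [pi_pos], by linarith⟩
  have hsin : 0 < sin (θ / 2) := sin_pos_of_pos_of_lt_pi (by linarith) (by linarith)
  have htan : tan (θ / 2) ≠ 0 := by rw [tan_eq_sin_div_cos]; positivity
  have hsin_double : sin θ = 2 * sin (θ / 2) * cos (θ / 2) := by
    rw [← sin_two_mul, mul_div_cancel₀ θ two_ne_zero]
  have htan_half : HasDerivAt (fun t => tan (t / 2)) (1 / cos (θ / 2) ^ 2 * (1 / 2)) θ :=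
    (hasDerivAt_tan hcos.ne').comp (h := fun t : ℝ => t / 2) θ ((hasDerivAt_id' θ).div_const 2)
  refine (htan_half.log htan).congr_deriv ?_
  rw [tan_eq_sin_div_cos, hsin_double]
  field_simp

theorem Real.hasDerivAt_half_mul_log_sin {θ : ℝ} (hθ : sin θ ≠ 0) :
    HasDerivAt (fun t => 1 / 2 * log (sin t)) (cos θ / (2 * sin θ)) θ :=
  ((hasDerivAt_sin θ).log hθ).const_mul (1 / 2) |>.congr_deriv (by ring)

theorem two_mul_mul_cos_div_two_mul_sin_add_sub_one_div_sin (s θ : ℝ) :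
    2 * s * (cos θ / (2 * sin θ)) + (s - 1) * (1 / sin θ)
      = (2 * s * cos (θ / 2) ^ 2 - 1) * (1 / sin θ) := by
  have hcos_half : cos (θ / 2) ^ 2 = 1 / 2 + cos θ / 2 := by
    rw [cos_sq, mul_div_cancel₀ θ two_ne_zero]
  rw [hcos_half]
  ring

theorem hasDerivAt_add_log_sin_add_log_tan_half {V : ℝ → ℝ} {V' θ : ℝ} (s : ℝ)
    (hV : HasDerivAt V V' θ) (hθ : θ ∈ Ioo 0 π) :
    HasDerivAt (fun t => V t + 2 * s * (1 / 2 * log (sin t)) + s * log (tan (t / 2)))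
      ((V' + 1 / sin θ) + (2 * s * cos (θ / 2) ^ 2 - 1) * (1 / sin θ)) θ := by
  have hsin : sin θ ≠ 0 := (sin_pos_of_pos_of_lt_pi hθ.1 hθ.2).ne'
  refine ((hV.add ((hasDerivAt_half_mul_log_sin hsin).const_mul (2 * s))).add
    ((hasDerivAt_log_tan_half hθ).const_mul s)).congr_deriv ?_
  linear_combination two_mul_mul_cos_div_two_mul_sin_add_sub_one_div_sin s θ

theorem deriv_mul_sub_mul_deriv_mul {ξ c W : ℝ → ℝ} {x : ℝ}
    (hξ : DifferentiableAt ℝ ξ x) (hc : DifferentiableAt ℝ c x) (hW : DifferentiableAt ℝ W x) :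
    deriv (fun t => ξ t * c t * W t) x - W x * deriv (fun t => ξ t * c t) x
      = ξ x * c x * deriv W x := by
  rw [deriv_fun_mul (hξ.fun_mul hc) hW]
  ring

theorem mul_add_mul_sq_eq {ξ c W : ℝ → ℝ} {x v' a : ℝ}
    (hξ : DifferentiableAt ℝ ξ x) (hc : DifferentiableAt ℝ c x)
    (hW : HasDerivAt W (v' + c x * a) x) :
    ξ x * (v' + c x * a) ^ 2
      = ξ x * v' ^ 2 - ξ x * c x ^ 2 * a ^ 2 + 2 * deriv (fun t => ξ t * c t * W t) x * a -
        2 * W x * deriv (fun t => ξ t * c t) x * a := by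
  have hprod := deriv_mul_sub_mul_deriv_mul hξ hc hW.differentiableAt
  rw [hW.deriv] at hprod
  linear_combination (-2 * a) * hprod

theorem stmt19_general (s : ℝ) (ξ V : ℝ → ℝ)
    (hξ : ∀ θ ∈ Set.Ioo (0 : ℝ) π, DifferentiableAt ℝ ξ θ)
    (hV : ∀ θ ∈ Set.Ioo (0 : ℝ) π, DifferentiableAt ℝ V θ)
    (h1 h2 v Vs cs : ℝ → ℝ)
    (hh1 : h1 = fun t => 1 / 2 * Real.log (Real.sin t))
    (hh2 : h2 = fun t => Real.log (Real.tan (t / 2)))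
    (hv : v = fun t => V t + h2 t)
    (hVs : Vs = fun t => V t + 2 * s * h1 t + s * h2 t)
    (hcs : cs = fun t => 2 * s * Real.cos (t / 2) ^ 2 - 1) :
    ∀ θ ∈ Set.Ioo (0 : ℝ) π,
      (ξ θ * (deriv Vs θ) ^ 2
          = ξ θ * (deriv v θ) ^ 2 - ξ θ * cs θ ^ 2 * (deriv h2 θ) ^ 2 +
            2 * deriv (fun t => ξ t * cs t * Vs t) θ * deriv h2 θ -
            2 * Vs θ * deriv (fun t => ξ t * cs t) θ * deriv h2 θ) ∧
      deriv h2 θ = 1 / Real.sin θ := by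
  subst hh1 hh2 hv hVs hcs
  intro θ hθ
  have hdh2 := hasDerivAt_log_tan_half hθ
  have hdv := (hV θ hθ).hasDerivAt.add hdh2
  have hdVs := hasDerivAt_add_log_sin_add_log_tan_half s (hV θ hθ).hasDerivAt hθ
  rw [← hdv.deriv, ← hdh2.deriv] at hdVs
  refine ⟨?_, hdh2.deriv⟩
  rw [hdVs.deriv]
  exact mul_add_mul_sq_eq (c := fun t => 2 * s * cos (t / 2) ^ 2 - 1) (hξ θ hθ) (by fun_prop) hdVs

/-- The pointwise identity (7.6) of the paper, relating the area functional to the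
quasi-harmonic energy after the substitutions `u = h₁ + U`, `v = h₂ + V` in Hopf
coordinates, together with `∂_θ h₂ = 1/sin θ`. -/
theorem stmt19 (s : ℝ) (hs : s = 0 ∨ s = 1) (ξ V : ℝ → ℝ)
    (hξpos : ∀ θ ∈ Set.Ioo (0 : ℝ) π, 0 < ξ θ)
    (hξ : ∀ θ ∈ Set.Ioo (0 : ℝ) π, DifferentiableAt ℝ ξ θ)
    (hV : ∀ θ ∈ Set.Ioo (0 : ℝ) π, DifferentiableAt ℝ V θ)
    (h1 h2 v Vs cs : ℝ → ℝ)
    (hh1 : h1 = fun t => 1 / 2 * Real.log (Real.sin t))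
    (hh2 : h2 = fun t => Real.log (Real.tan (t / 2)))
    (hv : v = fun t => V t + h2 t)
    (hVs : Vs = fun t => V t + 2 * s * h1 t + s * h2 t)
    (hcs : cs = fun t => 2 * s * Real.cos (t / 2) ^ 2 - 1) :
    ∀ θ ∈ Set.Ioo (0 : ℝ) π,
      (ξ θ * (deriv Vs θ) ^ 2
          = ξ θ * (deriv v θ) ^ 2 - ξ θ * cs θ ^ 2 * (deriv h2 θ) ^ 2 +
            2 * deriv (fun t => ξ t * cs t * Vs t) θ * deriv h2 θ -
            2 * Vs θ * deriv (fun t => ξ t * cs t) θ * deriv h2 θ) ∧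
      deriv h2 θ = 1 / Real.sin θ :=
  stmt19_general s ξ V hξ hV h1 h2 v Vs cs hh1 hh2 hv hVs hcs
end
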